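/- arXiv:1202.1537 — 9 statements merged into one kernel-verified Lean document; each statement's English description precedes it below -/
import Mathlib

section
/- Let 𝔥 be a nonzero complex Hilbert space and let 𝒫 and ℛ be anti-commuting unitary involutions on 𝔥 (𝒫ℛ = −ℛ𝒫). For complex numbers α₀, α₁, α₂, α₃, the bounded operator J = α₀·I + α₁·𝒫 + α₂·ℛ + α₃·(iℛ𝒫) is a unitary involution different from I and from −I if and only if α₀ = 0, the coefficients α₁, α₂, α₃ are real, and α₁² + α₂² + α₃² = 1. -/
open scoped InnerProductSpace

/-
  A paravector `a + b e₁ + c e₂ + d e₃` in pairwise anticommuting involutions squares to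
  `(a² + b² + c² + d²) + 2a (b e₁ + c e₂ + d e₃)`, and its coefficients are unique: the average of
  the conjugates `X, e₁ X e₁, e₂ X e₂, e₃ X e₃` with suitable signs isolates each of them. With
  `e₁ = 𝒫`, `e₂ = ℛ`, `e₃ = iℛ𝒫`, the condition `J² = 1` forces `α₀ (α₁, α₂, α₃) = 0`, and `α₀ ≠ 0`
  would give `J = ±1`; a unitary involution is self-adjoint, which makes the coefficients real.
-/

structure IsAnticommutingInvolutions {A : Type*} [Ring A] (e₁ e₂ e₃ : A) : Prop where
  mul_self₁ : e₁ * e₁ = 1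
  mul_self₂ : e₂ * e₂ = 1
  mul_self₃ : e₃ * e₃ = 1
  anticomm₁₂ : e₁ * e₂ = -(e₂ * e₁)
  anticomm₁₃ : e₁ * e₃ = -(e₃ * e₁)
  anticomm₂₃ : e₂ * e₃ = -(e₃ * e₂)

def paravector {𝕜 A : Type*} [CommRing 𝕜] [Ring A] [Algebra 𝕜 A] (e₁ e₂ e₃ : A)
    (a b c d : 𝕜) : A :=
  a • 1 + b • e₁ + c • e₂ + d • e₃

section CommRing

variable {𝕜 A : Type*} [CommRing 𝕜] [Ring A] [Algebra 𝕜 A] {e₁ e₂ e₃ : A}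

theorem paravector_zero_zero_zero (a : 𝕜) :
    paravector e₁ e₂ e₃ a 0 0 0 = algebraMap 𝕜 A a := by
  simp [paravector, Algebra.algebraMap_eq_smul_one]

theorem paravector_sub (a b c d a' b' c' d' : 𝕜) :
    paravector e₁ e₂ e₃ a b c d - paravector e₁ e₂ e₃ a' b' c' d' =
      paravector e₁ e₂ e₃ (a - a') (b - b') (c - c') (d - d') := by
  simp only [paravector]
  module

theorem star_paravector [StarRing 𝕜] [StarRing A] [StarModule 𝕜 A] (h₁ : IsSelfAdjoint e₁)
    (h₂ : IsSelfAdjoint e₂) (h₃ : IsSelfAdjoint e₃) (a b c d : 𝕜) :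
    star (paravector e₁ e₂ e₃ a b c d) =
      paravector e₁ e₂ e₃ (star a) (star b) (star c) (star d) := by
  simp only [paravector, star_add, star_smul, star_one, h₁.star_eq, h₂.star_eq, h₃.star_eq]

namespace IsAnticommutingInvolutions

theorem paravector_mul_self (h : IsAnticommutingInvolutions e₁ e₂ e₃) (a b c d : 𝕜) :
    paravector e₁ e₂ e₃ a b c d * paravector e₁ e₂ e₃ a b c d =
      paravector e₁ e₂ e₃ (a ^ 2 + b ^ 2 + c ^ 2 + d ^ 2) (2 * a * b) (2 * a * c) (2 * a * d) := by
  simp only [paravector, mul_add, add_mul, smul_mul_assoc, mul_smul_comm, one_mul, mul_one,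
    h.mul_self₁, h.mul_self₂, h.mul_self₃, h.anticomm₁₂, h.anticomm₁₃, h.anticomm₂₃]
  module

theorem mul_paravector_mul (h : IsAnticommutingInvolutions e₁ e₂ e₃) (a b c d : 𝕜) :
    e₁ * paravector e₁ e₂ e₃ a b c d * e₁ = paravector e₁ e₂ e₃ a b (-c) (-d) ∧
      e₂ * paravector e₁ e₂ e₃ a b c d * e₂ = paravector e₁ e₂ e₃ a (-b) c (-d) ∧
      e₃ * paravector e₁ e₂ e₃ a b c d * e₃ = paravector e₁ e₂ e₃ a (-b) (-c) d := by
  have flip {x y : A} (hy : y * y = 1) (hxy : x * y = -(y * x)) : y * x * y = -x := by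
    rw [mul_assoc, hxy, mul_neg, ← mul_assoc, hy, one_mul]
  have flip' {x y : A} (hy : y * y = 1) (hyx : y * x = -(x * y)) : y * x * y = -x := by
    rw [hyx, neg_mul, mul_assoc, hy, mul_one]
  simp only [paravector, mul_add, add_mul, smul_mul_assoc, mul_smul_comm, one_mul, mul_one,
    h.mul_self₁, h.mul_self₂, h.mul_self₃, flip' h.mul_self₁ h.anticomm₁₂,
    flip' h.mul_self₁ h.anticomm₁₃, flip h.mul_self₂ h.anticomm₁₂, flip' h.mul_self₂ h.anticomm₂₃,
    flip h.mul_self₃ h.anticomm₁₃, flip h.mul_self₃ h.anticomm₂₃]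
  refine ⟨?_, ?_, ?_⟩ <;> module

end IsAnticommutingInvolutions

end CommRing

namespace IsAnticommutingInvolutions

section Field

variable {𝕜 A : Type*} [Field 𝕜] [NeZero (2 : 𝕜)] [Ring A] [Nontrivial A] [Algebra 𝕜 A]
  {e₁ e₂ e₃ : A}

theorem paravector_eq_zero (h : IsAnticommutingInvolutions e₁ e₂ e₃) {a b c d : 𝕜}
    (hX : paravector e₁ e₂ e₃ a b c d = 0) : a = 0 ∧ b = 0 ∧ c = 0 ∧ d = 0 := by
  obtain ⟨h₁, h₂, h₃⟩ := h.mul_paravector_mul a b c d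
  rw [hX, mul_zero, zero_mul, eq_comm] at h₁ h₂ h₃
  unfold paravector at hX h₁ h₂ h₃
  have h4 : (4 : 𝕜) ≠ 0 := by
    simpa [show (4 : 𝕜) = 2 * 2 by norm_num] using (two_ne_zero (α := 𝕜))
  have coeff_eq_zero {x : 𝕜} {e : A} (he : e * e = 1) (hx : (4 * x) • e = 0) : x = 0 := by
    simpa [h4, left_ne_zero_of_mul_eq_one he] using hx
  refine ⟨coeff_eq_zero (one_mul 1) ?_, coeff_eq_zero h.mul_self₁ ?_,
    coeff_eq_zero h.mul_self₂ ?_, coeff_eq_zero h.mul_self₃ ?_⟩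
  · linear_combination (norm := module) hX + h₁ + h₂ + h₃
  · linear_combination (norm := module) hX + h₁ - h₂ - h₃
  · linear_combination (norm := module) hX - h₁ + h₂ - h₃
  · linear_combination (norm := module) hX - h₁ - h₂ + h₃

theorem paravector_inj (h : IsAnticommutingInvolutions e₁ e₂ e₃) {a b c d a' b' c' d' : 𝕜} :
    paravector e₁ e₂ e₃ a b c d = paravector e₁ e₂ e₃ a' b' c' d' ↔
      a = a' ∧ b = b' ∧ c = c' ∧ d = d' := by
  refine ⟨fun hX => ?_, fun ⟨ha, hb, hc, hd⟩ => ha ▸ hb ▸ hc ▸ hd ▸ rfl⟩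
  rw [← sub_eq_zero, paravector_sub] at hX
  simpa only [sub_eq_zero] using h.paravector_eq_zero hX

end Field

section Complex

variable {A : Type*} [Ring A] [Algebra ℂ A] {p r : A}

theorem of_anticomm (hp : p * p = 1) (hr : r * r = 1) (hpr : p * r = -(r * p)) :
    IsAnticommutingInvolutions p r (Complex.I • (r * p)) := by
  have hprp : p * r * p = -r := by rw [hpr, neg_mul, mul_assoc, hp, mul_one]
  have hrpr : r * p * r = -p := by
    rw [mul_assoc, hpr, mul_neg, ← mul_assoc, hr, one_mul]
  have hrpp : r * p * p = r := by rw [mul_assoc, hp, mul_one]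
  have hrrp : r * r * p = p := by rw [hr, one_mul]
  refine ⟨hp, hr, ?_, hpr, ?_, ?_⟩ <;>
  · simp only [smul_mul_assoc, mul_smul_comm, smul_smul, ← mul_assoc, hprp, hrpr, hrpp, hrrp,
      neg_mul, hp, smul_neg, neg_smul, one_smul, neg_neg, Complex.I_mul_I]

theorem isSelfAdjoint_I_smul_mul [StarRing A] [StarModule ℂ A] (hp : IsSelfAdjoint p)
    (hr : IsSelfAdjoint r) (hpr : p * r = -(r * p)) : IsSelfAdjoint (Complex.I • (r * p)) := by
  rw [IsSelfAdjoint, star_smul, star_mul, hp.star_eq, hr.star_eq, hpr, Complex.star_def,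
    Complex.conj_I, neg_smul, smul_neg, neg_neg]

theorem paravector_isInvolution_isSelfAdjoint_iff [Nontrivial A] [StarRing A] [StarModule ℂ A]
    {e₁ e₂ e₃ : A} (h : IsAnticommutingInvolutions e₁ e₂ e₃) (h₁ : IsSelfAdjoint e₁)
    (h₂ : IsSelfAdjoint e₂) (h₃ : IsSelfAdjoint e₃) (a b c d : ℂ) :
    (paravector e₁ e₂ e₃ a b c d * paravector e₁ e₂ e₃ a b c d = 1 ∧
        IsSelfAdjoint (paravector e₁ e₂ e₃ a b c d) ∧
        paravector e₁ e₂ e₃ a b c d ≠ 1 ∧ paravector e₁ e₂ e₃ a b c d ≠ -1) ↔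
      (a = 0 ∧ b.im = 0 ∧ c.im = 0 ∧ d.im = 0 ∧ b ^ 2 + c ^ 2 + d ^ 2 = 1) := by
  have one_eq : (1 : A) = paravector e₁ e₂ e₃ (1 : ℂ) 0 0 0 := by
    rw [paravector_zero_zero_zero, map_one]
  have neg_one_eq : (-1 : A) = paravector e₁ e₂ e₃ (-1 : ℂ) 0 0 0 := by
    rw [paravector_zero_zero_zero, map_neg, map_one]
  rw [neg_one_eq, one_eq]
  simp only [h.paravector_mul_self, IsSelfAdjoint, star_paravector h₁ h₂ h₃, Ne,
    h.paravector_inj, Complex.star_def, Complex.conj_eq_iff_im]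
  constructor
  · rintro ⟨⟨hsum, hb, hc, hd⟩, ⟨-, hb', hc', hd'⟩, hne₁, hne₂⟩
    obtain rfl : a = 0 := by
      by_contra ha
      obtain ⟨rfl, rfl, rfl⟩ : b = 0 ∧ c = 0 ∧ d = 0 :=
        ⟨by simpa [ha] using hb, by simpa [ha] using hc, by simpa [ha] using hd⟩
      obtain rfl | rfl : a = 1 ∨ a = -1 := by simpa using hsum
      · exact hne₁ ⟨rfl, rfl, rfl, rfl⟩
      · exact hne₂ ⟨rfl, rfl, rfl, rfl⟩
    exact ⟨rfl, hb', hc', hd', by linear_combination hsum⟩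
  · rintro ⟨rfl, hb, hc, hd, hsum⟩
    refine ⟨⟨by linear_combination hsum, by ring, by ring, by ring⟩, ⟨by simp, hb, hc, hd⟩, ?_, ?_⟩
      <;> norm_num

end Complex

end IsAnticommutingInvolutions

theorem star_mul_self_eq_one_iff_isSelfAdjoint {M : Type*} [Monoid M] [StarMul M] {u : M}
    (hu : u * u = 1) : star u * u = 1 ↔ IsSelfAdjoint u :=
  ⟨fun h => left_inv_eq_right_inv h hu, fun h => by rw [h.star_eq, hu]⟩

theorem ContinuousLinearMap.involutive_and_inner_map_map_iff {𝕜 H : Type*} [RCLike 𝕜]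
    [NormedAddCommGroup H] [InnerProductSpace 𝕜 H] [CompleteSpace H] (u : H →L[𝕜] H) :
    ((∀ f, u (u f) = f) ∧ ∀ f g : H, ⟪u f, u g⟫_𝕜 = ⟪f, g⟫_𝕜) ↔ u * u = 1 ∧ IsSelfAdjoint u := by
  have involutive_iff : (∀ f, u (u f) = f) ↔ u * u = 1 :=
    ⟨fun h => ext h, fun h f => DFunLike.congr_fun h f⟩
  rw [involutive_iff, u.inner_map_map_iff_adjoint_comp_self, ← star_eq_adjoint]
  exact and_congr_right fun hu => star_mul_self_eq_one_iff_isSelfAdjoint hu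

/-- For anti-commuting unitary involutions `𝒫, ℛ` on a nonzero complex Hilbert
space, the operator `J = α₀ I + α₁ 𝒫 + α₂ ℛ + α₃ (iℛ𝒫)` is a unitary involution different from
`±I` iff `α₀ = 0`, the coefficients `α₁, α₂, α₃` are real and `α₁² + α₂² + α₃² = 1`. -/
theorem unitary_involution_in_clifford_iff
    {𝕳 : Type*} [NormedAddCommGroup 𝕳] [InnerProductSpace ℂ 𝕳] [CompleteSpace 𝕳]
    [Nontrivial 𝕳]
    (P R : 𝕳 →L[ℂ] 𝕳)
    (hP2 : ∀ f, P (P f) = f)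
    (hPinner : ∀ f g : 𝕳, ⟪P f, P g⟫_ℂ = ⟪f, g⟫_ℂ)
    (hR2 : ∀ f, R (R f) = f)
    (hRinner : ∀ f g : 𝕳, ⟪R f, R g⟫_ℂ = ⟪f, g⟫_ℂ)
    (hanti : P ∘L R = -(R ∘L P))
    (α₀ α₁ α₂ α₃ : ℂ)
    (J : 𝕳 →L[ℂ] 𝕳)
    (hJ : J = α₀ • (1 : 𝕳 →L[ℂ] 𝕳) + α₁ • P + α₂ • R + α₃ • (Complex.I • (R ∘L P))) :
    ((∀ f, J (J f) = f) ∧ (∀ f g : 𝕳, ⟪J f, J g⟫_ℂ = ⟪f, g⟫_ℂ) ∧ J ≠ 1 ∧ J ≠ -1)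
      ↔ (α₀ = 0 ∧ α₁.im = 0 ∧ α₂.im = 0 ∧ α₃.im = 0 ∧ α₁ ^ 2 + α₂ ^ 2 + α₃ ^ 2 = 1) := by
  obtain ⟨hP, hPsa⟩ := P.involutive_and_inner_map_map_iff.mp ⟨hP2, hPinner⟩
  obtain ⟨hR, hRsa⟩ := R.involutive_and_inner_map_map_iff.mp ⟨hR2, hRinner⟩
  have h := IsAnticommutingInvolutions.of_anticomm hP hR hanti
  have hJ' : J = paravector P R (Complex.I • (R * P)) α₀ α₁ α₂ α₃ := hJ
  rw [← and_assoc, J.involutive_and_inner_map_map_iff, and_assoc, hJ']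
  exact h.paravector_isInvolution_isSelfAdjoint_iff hPsa hRsa
    (IsAnticommutingInvolutions.isSelfAdjoint_I_smul_mul hPsa hRsa hanti) α₀ α₁ α₂ α₃
end

section
/- Let 𝔥 be a nonzero complex Hilbert space, 𝒫 and ℛ anti-commuting unitary involutions on 𝔥 (𝒫ℛ = −ℛ𝒫), and 𝒯 a conjugation on 𝔥 with 𝒫𝒯 = 𝒯𝒫 and ℛ𝒯 = 𝒯ℛ. Let J = α₁·𝒫 + α₂·ℛ + α₃·(iℛ𝒫) with α₁, α₂, α₃ ∈ ℝ and α₁² + α₂² + α₃² = 1 (so that J is a unitary involution different from ±I). Then J commutes with 𝒫𝒯 (i.e. J(𝒫𝒯f) = 𝒫𝒯(Jf) for all f ∈ 𝔥) if and only if there exists ξ ∈ [0, 2π) such that J = exp(iξℛ)𝒫. -/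
/-!
`𝒫𝒯` commutes with `𝒫` and with `iℛ𝒫` but anticommutes with `ℛ` (the conjugation `𝒯` flips the
sign of `i`), so the commutator of `J` with `𝒫𝒯` is `2α₂ ℛ𝒫𝒯`; as `ℛ𝒫𝒯` is bijective and
`𝔥 ≠ 0`, it vanishes exactly when `α₂ = 0`. Since `ℛ² = 1`, `exp(iξℛ) = cos ξ + i sin ξ ℛ`, so the
operators `exp(iξℛ)𝒫` are exactly the `α₁𝒫 + α₃ iℛ𝒫` with `α₁² + α₃² = 1`.
-/

open scoped InnerProductSpace Real
open Complex

theorem NormedSpace.exp_I_mul_smul_of_mul_self_eq_one {A : Type*} [NormedRing A]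
    [NormedAlgebra ℂ A] {r : A} (hr : r * r = 1) (z : ℂ) :
    exp ((I * z) • r) = cos z • (1 : A) + (I * sin z) • r := by
  have hr2 : r ^ 2 = 1 := by rw [sq, hr]
  rw [exp_eq_tsum ℂ]
  refine HasSum.tsum_eq (HasSum.even_add_odd ?_ ?_)
  · convert (hasSum_cos z).smul_const (1 : A) using 2 with n
    rw [smul_pow, pow_mul r, hr2, one_pow, smul_smul, mul_pow, pow_mul, I_sq]
    field_simp
  · convert ((hasSum_sin z).mul_left I).smul_const r using 2 with n
    rw [smul_pow, pow_succ r, pow_mul r, hr2, one_pow, one_mul, smul_smul, mul_pow, pow_succ,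
      pow_mul, I_sq]
    field_simp

theorem Real.exists_mem_Ico_cos_eq_sin_eq {a b : ℝ} (h : a ^ 2 + b ^ 2 = 1) :
    ∃ ξ ∈ Set.Ico 0 (2 * π), cos ξ = a ∧ sin ξ = b := by
  set z : ℂ := ⟨a, b⟩
  have hz : ‖z‖ = 1 := by
    rw [Complex.norm_def, Complex.normSq_mk, ← sq, ← sq, h, Real.sqrt_one]
  have hcos := Complex.norm_mul_cos_arg z
  have hsin := Complex.norm_mul_sin_arg z
  rw [hz, one_mul] at hcos hsin
  refine ⟨toIcoMod Real.two_pi_pos 0 z.arg, toIcoMod_mem_Ico' _ _, ?_⟩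
  rw [← self_sub_toIcoDiv_zsmul, zsmul_eq_mul, Real.cos_sub_int_mul_two_pi,
    Real.sin_sub_int_mul_two_pi]
  exact ⟨hcos, hsin⟩

theorem apply_PT_sub_PT_apply {E : Type*} [NormedAddCommGroup E] [NormedSpace ℂ E]
    {P R : E →L[ℂ] E} {T : E →ₗ⋆[ℂ] E} (hP2 : ∀ f, P (P f) = f) (hanti : P ∘L R = -(R ∘L P))
    (hPT : ∀ f, P (T f) = T (P f)) (hRT : ∀ f, R (T f) = T (R f)) {a b c : ℝ}
    {J : E →L[ℂ] E} (hJ : J = (a : ℂ) • P + (b : ℂ) • R + (c : ℂ) • (I • (R ∘L P))) (f : E) :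
    J (P (T f)) - P (T (J f)) = (2 * b : ℂ) • R (P (T f)) := by
  have hPR (g : E) : P (R g) = -R (P g) := by simpa using DFunLike.congr_fun hanti g
  simp only [hJ, add_apply, smul_apply, ContinuousLinearMap.comp_apply, map_add, map_smulₛₗ,
    ← hPT, ← hRT, hPR, hP2, map_neg, RingHom.id_apply, conj_ofReal, conj_I]
  module

/-- The zero coefficient of `R` puts `exp(iξR)P` in the shape of `J` with `α₂ = 0`. -/
theorem exp_I_mul_smul_comp_eq {E : Type*} [NormedAddCommGroup E] [NormedSpace ℂ E]
    {R : E →L[ℂ] E} (hR2 : ∀ f, R (R f) = f) (P : E →L[ℂ] E) (ξ : ℝ) :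
    NormedSpace.exp ((I * ξ) • R) ∘L P
      = (Real.cos ξ : ℂ) • P + ((0 : ℝ) : ℂ) • R + (Real.sin ξ : ℂ) • (I • (R ∘L P)) := by
  have hRR : R * R = 1 := ContinuousLinearMap.ext hR2
  rw [NormedSpace.exp_I_mul_smul_of_mul_self_eq_one hRR]
  ext f
  simp only [ContinuousLinearMap.comp_apply, add_apply, smul_apply,
    one_apply_eq_self, ofReal_cos, ofReal_sin, ofReal_zero, zero_smul, add_zero]
  module

theorem PT_symmetric_involution_iff_Pxi_general
    {𝕳 : Type*} [NormedAddCommGroup 𝕳] [InnerProductSpace ℂ 𝕳]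
    [Nontrivial 𝕳]
    (P R : 𝕳 →L[ℂ] 𝕳)
    (hP2 : ∀ f, P (P f) = f)
    (hR2 : ∀ f, R (R f) = f)
    (hanti : P ∘L R = -(R ∘L P))
    (T : 𝕳 → 𝕳)
    (hTadd : ∀ f g, T (f + g) = T f + T g)
    (hTsmul : ∀ (c : ℂ) (f : 𝕳), T (c • f) = (starRingEnd ℂ c) • T f)
    (hT2 : ∀ f, T (T f) = f)
    (hPT : ∀ f, P (T f) = T (P f))
    (hRT : ∀ f, R (T f) = T (R f))
    (α₁ α₂ α₃ : ℝ)
    (hsum : α₁ ^ 2 + α₂ ^ 2 + α₃ ^ 2 = 1)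
    (J : 𝕳 →L[ℂ] 𝕳)
    (hJ : J = (α₁ : ℂ) • P + (α₂ : ℂ) • R + (α₃ : ℂ) • (Complex.I • (R ∘L P))) :
    (∀ f, J (P (T f)) = P (T (J f)))
      ↔ ∃ ξ ∈ Set.Ico (0 : ℝ) (2 * π),
          J = NormedSpace.exp ((Complex.I * (ξ : ℂ)) • R) ∘L P := by
  let Tₗ : 𝕳 →ₗ⋆[ℂ] 𝕳 := { toFun := T, map_add' := hTadd, map_smul' := hTsmul }
  constructor
  · intro hcomm
    have hα₂ : α₂ = 0 := by
      obtain ⟨g, hg⟩ := exists_ne (0 : 𝕳)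
      have h := apply_PT_sub_PT_apply (T := Tₗ) hP2 hanti hPT hRT hJ (T (P (R g)))
      rw [show J (P (Tₗ _)) = P (Tₗ (J _)) from hcomm _, sub_self] at h
      simpa [Tₗ, hT2, hP2, hR2, hg] using h.symm
    obtain ⟨ξ, hξ, hcos, hsin⟩ :=
      Real.exists_mem_Ico_cos_eq_sin_eq (a := α₁) (b := α₃) (by rw [hα₂] at hsum; linarith)
    exact ⟨ξ, hξ, by rw [exp_I_mul_smul_comp_eq hR2, hJ, hcos, hsin, hα₂]⟩
  · rintro ⟨ξ, -, hJξ⟩ f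
    have h := apply_PT_sub_PT_apply (T := Tₗ) hP2 hanti hPT hRT
      (hJξ.trans (exp_I_mul_smul_comp_eq hR2 P ξ)) f
    rw [ofReal_zero, mul_zero, zero_smul, sub_eq_zero] at h
    exact h

/-- Lemma on `𝒫𝒯`-symmetric involutions in the Clifford algebra:
a non-trivial unitary involution `J = α₁𝒫 + α₂ℛ + α₃ iℛ𝒫` (with real coefficients of unit
square sum) commutes with `𝒫𝒯` iff `J = exp(iξℛ)𝒫` for some `ξ ∈ [0, 2π)`. -/
theorem PT_symmetric_involution_iff_Pxi
    {𝕳 : Type*} [NormedAddCommGroup 𝕳] [InnerProductSpace ℂ 𝕳] [CompleteSpace 𝕳]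
    [Nontrivial 𝕳]
    (P R : 𝕳 →L[ℂ] 𝕳)
    (hP2 : ∀ f, P (P f) = f)
    (hPinner : ∀ f g : 𝕳, ⟪P f, P g⟫_ℂ = ⟪f, g⟫_ℂ)
    (hR2 : ∀ f, R (R f) = f)
    (hRinner : ∀ f g : 𝕳, ⟪R f, R g⟫_ℂ = ⟪f, g⟫_ℂ)
    (hanti : P ∘L R = -(R ∘L P))
    (T : 𝕳 → 𝕳)
    (hTadd : ∀ f g, T (f + g) = T f + T g)
    (hTsmul : ∀ (c : ℂ) (f : 𝕳), T (c • f) = (starRingEnd ℂ c) • T f)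
    (hT2 : ∀ f, T (T f) = f)
    (hTinner : ∀ f g : 𝕳, ⟪T f, T g⟫_ℂ = ⟪g, f⟫_ℂ)
    (hPT : ∀ f, P (T f) = T (P f))
    (hRT : ∀ f, R (T f) = T (R f))
    (α₁ α₂ α₃ : ℝ)
    (hsum : α₁ ^ 2 + α₂ ^ 2 + α₃ ^ 2 = 1)
    (J : 𝕳 →L[ℂ] 𝕳)
    (hJ : J = (α₁ : ℂ) • P + (α₂ : ℂ) • R + (α₃ : ℂ) • (Complex.I • (R ∘L P))) :
    (∀ f, J (P (T f)) = P (T (J f)))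
      ↔ ∃ ξ ∈ Set.Ico (0 : ℝ) (2 * π),
          J = NormedSpace.exp ((Complex.I * (ξ : ℂ)) • R) ∘L P :=
  PT_symmetric_involution_iff_Pxi_general P R hP2 hR2 hanti T hTadd hTsmul hT2 hPT hRT α₁ α₂ α₃ hsum
    J hJ
end

section
/- Let 𝔥 be a nonzero complex Hilbert space, 𝒫 and ℛ anti-commuting unitary involutions on 𝔥 (𝒫ℛ = −ℛ𝒫), and 𝒯 a conjugation on 𝔥 with 𝒫𝒯 = 𝒯𝒫 and ℛ𝒯 = 𝒯ℛ. Let T = α₀·I + α₁·𝒫 + α₂·ℛ + α₃·(iℛ𝒫) with α₀, α₁, α₂, α₃ ∈ ℂ. Then T commutes with 𝒫𝒯 (i.e. T(𝒫𝒯f) = 𝒫𝒯(Tf) for all f ∈ 𝔥) if and only if α₀, α₁, α₃ are real and α₂ is purely imaginary. -/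
open scoped InnerProductSpace

/-!
Conjugating by 𝒫 fixes `1, 𝒫` and negates `ℛ, ℛ𝒫`, and conjugating by ℛ fixes `1` and negates
`𝒫`; since the space is nonzero this makes `1, 𝒫, ℛ, ℛ𝒫` linearly independent. The antilinear
map `𝒫𝒯` is an involution and `𝒫𝒯 ∘ T ∘ 𝒫𝒯 = ᾱ₀ + ᾱ₁𝒫 - ᾱ₂ℛ + ᾱ₃ iℛ𝒫`, so `T` commutes with `𝒫𝒯`
exactly when these coefficients agree with `α₀, α₁, α₂, α₃`.
-/

section AnticommutingInvolutions

variable {K A : Type*} [Field K] [NeZero (2 : K)] [Ring A] [Algebra K A] [Nontrivial A]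
  {p r : A}

theorem smul_one_add_smul_eq_zero_of_anticommute (hp : p * p = 1) (hr : r * r = 1)
    (hpr : p * r = -(r * p)) {a b : K} (h : a • 1 + b • p = 0) : a = 0 ∧ b = 0 := by
  have hrpr : r * p * r = -p := by rw [mul_assoc, hpr, mul_neg, ← mul_assoc, hr, one_mul]
  have hflip : a • 1 - b • p = 0 := by
    simpa [mul_add, add_mul, smul_mul_assoc, hr, hrpr, sub_eq_add_neg] using
      congrArg (fun x => r * x * r) h
  have ha : (2 * a) • (1 : A) = 0 := by linear_combination (norm := module) h + hflip
  have hb : (2 * b) • (1 : A) = 0 := by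
    simpa [mul_smul, add_mul, smul_mul_assoc, hp] using
      congrArg (· * p) (show (2 * b) • p = 0 by linear_combination (norm := module) h - hflip)
  simpa [two_ne_zero] using And.intro ha hb

theorem smul_one_add_smul_add_smul_add_smul_mul_eq_zero_iff (hp : p * p = 1) (hr : r * r = 1)
    (hpr : p * r = -(r * p)) {a b c d : K} :
    a • 1 + b • p + c • r + d • (r * p) = 0 ↔ a = 0 ∧ b = 0 ∧ c = 0 ∧ d = 0 := by
  refine ⟨fun h => ?_, by rintro ⟨rfl, rfl, rfl, rfl⟩; simp⟩
  have hprp : p * r * p = -r := by rw [hpr, neg_mul, mul_assoc, hp, mul_one]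
  have hrpp : r * p * p = r := by rw [mul_assoc, hp, mul_one]
  have hflip : a • 1 + b • p - c • r - d • (r * p) = 0 := by
    simpa [mul_add, add_mul, smul_mul_assoc, mul_smul_comm, hp, hprp, ← mul_assoc, hpr, hrpp,
      sub_eq_add_neg] using
      congrArg (fun x => p * x * p) h
  have hab : (2 * a) • 1 + (2 * b) • p = 0 := by linear_combination (norm := module) h + hflip
  have hcd : (2 * c) • 1 + (2 * d) • p = 0 := by
    simpa [mul_add, mul_smul_comm, ← mul_assoc, hr] using
      congrArg (r * ·) (show (2 * c) • r + (2 * d) • (r * p) = 0 by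
        linear_combination (norm := module) h - hflip)
  simpa [two_ne_zero, and_assoc] using
    And.intro (smul_one_add_smul_eq_zero_of_anticommute hp hr hpr hab)
      (smul_one_add_smul_eq_zero_of_anticommute hp hr hpr hcd)

end AnticommutingInvolutions

open ComplexConjugate in
theorem PT_symmetric_coefficients_iff_general
    {𝕳 : Type*} [NormedAddCommGroup 𝕳] [InnerProductSpace ℂ 𝕳]
    [Nontrivial 𝕳]
    (P R : 𝕳 →L[ℂ] 𝕳)
    (hP2 : ∀ f, P (P f) = f)
    (hR2 : ∀ f, R (R f) = f)
    (hanti : P ∘L R = -(R ∘L P))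
    (T : 𝕳 → 𝕳)
    (hTadd : ∀ f g, T (f + g) = T f + T g)
    (hTsmul : ∀ (c : ℂ) (f : 𝕳), T (c • f) = (starRingEnd ℂ c) • T f)
    (hT2 : ∀ f, T (T f) = f)
    (hPT : ∀ f, P (T f) = T (P f))
    (hRT : ∀ f, R (T f) = T (R f))
    (α₀ α₁ α₂ α₃ : ℂ)
    (A : 𝕳 →L[ℂ] 𝕳)
    (hA : A = α₀ • (1 : 𝕳 →L[ℂ] 𝕳) + α₁ • P + α₂ • R + α₃ • (Complex.I • (R ∘L P))) :
    (∀ f, A (P (T f)) = P (T (A f)))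
      ↔ (α₀.im = 0 ∧ α₁.im = 0 ∧ α₂.re = 0 ∧ α₃.im = 0) := by
  have hPR : ∀ f, P (R f) = -R (P f) := fun f => by simpa using congr($hanti f)
  have hTneg : ∀ f, T (-f) = -T f := fun f => by simpa using hTsmul (-1) f
  have hPT_invol : ∀ f, P (T (P (T f))) = f := fun f => by rw [hPT, hP2, hT2]
  set A' : 𝕳 →L[ℂ] 𝕳 :=
    conj α₀ • 1 + conj α₁ • P + (-conj α₂) • R + conj α₃ • (Complex.I • (R ∘L P))
  have hPTA : ∀ f, P (T (A f)) = A' (P (T f)) := fun f => by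
    simp [hA, A', hTadd, hTsmul, hTneg, hPT, hRT, hP2, hPR]
  calc (∀ f, A (P (T f)) = P (T (A f))) ↔ A = A' := by
        simp_rw [hPTA]
        exact ⟨fun h => ContinuousLinearMap.ext fun g => by simpa [hPT_invol] using h (P (T g)),
          fun h f => by rw [h]⟩
    _ ↔ (α₀ - conj α₀) • 1 + (α₁ - conj α₁) • P + (α₂ + conj α₂) • R
          + ((α₃ - conj α₃) * Complex.I) • (R * P) = 0 := by
        rw [← sub_eq_zero, hA, ContinuousLinearMap.mul_def]
        exact iff_of_eq (congrArg (· = 0) (by module))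
    _ ↔ _ := smul_one_add_smul_add_smul_add_smul_mul_eq_zero_iff
          (ContinuousLinearMap.ext hP2) (ContinuousLinearMap.ext hR2) hanti
    _ ↔ _ := by
        simp [sub_eq_zero, eq_comm (b := conj _), Complex.conj_eq_iff_im, Complex.add_conj]

/-- `T = α₀I + α₁𝒫 + α₂ℛ + α₃ iℛ𝒫` commutes with `𝒫𝒯` iff
`α₀, α₁, α₃` are real and `α₂` is purely imaginary. -/
theorem PT_symmetric_coefficients_iff
    {𝕳 : Type*} [NormedAddCommGroup 𝕳] [InnerProductSpace ℂ 𝕳] [CompleteSpace 𝕳]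
    [Nontrivial 𝕳]
    (P R : 𝕳 →L[ℂ] 𝕳)
    (hP2 : ∀ f, P (P f) = f)
    (hPinner : ∀ f g : 𝕳, ⟪P f, P g⟫_ℂ = ⟪f, g⟫_ℂ)
    (hR2 : ∀ f, R (R f) = f)
    (hRinner : ∀ f g : 𝕳, ⟪R f, R g⟫_ℂ = ⟪f, g⟫_ℂ)
    (hanti : P ∘L R = -(R ∘L P))
    (T : 𝕳 → 𝕳)
    (hTadd : ∀ f g, T (f + g) = T f + T g)
    (hTsmul : ∀ (c : ℂ) (f : 𝕳), T (c • f) = (starRingEnd ℂ c) • T f)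
    (hT2 : ∀ f, T (T f) = f)
    (hTinner : ∀ f g : 𝕳, ⟪T f, T g⟫_ℂ = ⟪g, f⟫_ℂ)
    (hPT : ∀ f, P (T f) = T (P f))
    (hRT : ∀ f, R (T f) = T (R f))
    (α₀ α₁ α₂ α₃ : ℂ)
    (A : 𝕳 →L[ℂ] 𝕳)
    (hA : A = α₀ • (1 : 𝕳 →L[ℂ] 𝕳) + α₁ • P + α₂ • R + α₃ • (Complex.I • (R ∘L P))) :
    (∀ f, A (P (T f)) = P (T (A f)))
      ↔ (α₀.im = 0 ∧ α₁.im = 0 ∧ α₂.re = 0 ∧ α₃.im = 0) :=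
  PT_symmetric_coefficients_iff_general P R hP2 hR2 hanti T hTadd hTsmul hT2 hPT hRT α₀ α₁ α₂ α₃ A
    hA
end

section
/- Let 𝔥 be a nonzero complex Hilbert space, 𝒫 and ℛ anti-commuting unitary involutions on 𝔥 (𝒫ℛ = −ℛ𝒫), ξ, χ ∈ ℝ, 𝒫_ξ := exp(iξℛ)𝒫, and 𝒞 := exp(χ·iℛ𝒫_ξ)·𝒫_ξ. Let T = β₀·I + β₁·𝒫_ξ + β₂·ℛ with β₀, β₁ real and β₂ purely imaginary. Then 𝒞T = T𝒞 if and only if β₂ = i·β₁·tanh χ, equivalently if and only if there exist real numbers b₀, b₁ with T = b₀·I + b₁·𝒞. -/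
open scoped InnerProductSpace

/-!
For an involution `A`, the exponential series splits into even and odd parts, so
`exp (c • A) = cosh c • 1 + sinh c • A`. Hence `𝒫_ξ` is again an involution anticommuting with
`ℛ`, `iℛ𝒫_ξ` is an involution, and `𝒞 = cosh χ • 𝒫_ξ + (i sinh χ) • ℛ`. For anticommuting
involutions `P, R` the commutator of `c • P + d • R` with `b₀ • 1 + b₁ • P + b₂ • R` is
`2 (d b₁ - c b₂) • R P`, and `R P` is invertible, so `𝒞` commutes with `T` exactly when
`cosh χ · β₂ = i sinh χ · β₁`.
-/

open Complex NormedSpace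

theorem NormedSpace.exp_smul_of_mul_self_eq_one {𝔸 : Type*} [Ring 𝔸] [Algebra ℂ 𝔸]
    [TopologicalSpace 𝔸] [IsTopologicalRing 𝔸] [ContinuousSMul ℂ 𝔸] [T2Space 𝔸]
    {A : 𝔸} (hA : A * A = 1) (c : ℂ) :
    exp (c • A) = cosh c • (1 : 𝔸) + sinh c • A := by
  have hA2 : A ^ 2 = 1 := by rw [sq, hA]
  rw [exp_eq_tsum ℂ]
  refine HasSum.tsum_eq (HasSum.even_add_odd ?_ ?_)
  · convert (hasSum_cosh c).smul_const (1 : 𝔸) using 2 with n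
    rw [smul_pow, pow_mul A 2 n, hA2, one_pow, smul_smul, div_eq_inv_mul]
  · convert (hasSum_sinh c).smul_const A using 2 with n
    rw [smul_pow, pow_succ A, pow_mul A 2 n, hA2, one_pow, one_mul, smul_smul, div_eq_inv_mul]

section AnticommutingInvolutions

variable {𝔸 : Type*} [Ring 𝔸] [Algebra ℂ 𝔸] {P R : 𝔸}

theorem commute_smul_add_smul_iff [Nontrivial 𝔸] (hP : P * P = 1) (hR : R * R = 1)
    (hPR : P * R = -(R * P)) (c d b₀ b₁ b₂ : ℂ) :
    Commute (c • P + d • R) (b₀ • 1 + b₁ • P + b₂ • R) ↔ c * b₂ = d * b₁ := by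
  have hcomm : (c • P + d • R) * (b₀ • 1 + b₁ • P + b₂ • R)
      - (b₀ • 1 + b₁ • P + b₂ • R) * (c • P + d • R) = (2 * (d * b₁ - c * b₂)) • (R * P) := by
    simp only [mul_add, add_mul, smul_mul_assoc, mul_smul_comm, mul_one, one_mul, hP, hR, hPR]
    module
  have hRP : R * P * (P * R) = 1 := by rw [mul_assoc, ← mul_assoc P, hP, one_mul, hR]
  rw [Commute, SemiconjBy, ← sub_eq_zero, hcomm]
  constructor
  · intro h
    have := congrArg (· * (P * R)) h
    simp only [smul_mul_assoc, hRP, zero_mul, smul_eq_zero, one_ne_zero, or_false] at this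
    linear_combination -this / 2
  · intro h
    rw [h, sub_self, mul_zero, zero_smul]

theorem I_smul_mul_mul_self (hP : P * P = 1) (hR : R * R = 1) (hPR : P * R = -(R * P)) :
    (I • (R * P)) * (I • (R * P)) = 1 := by
  rw [smul_mul_smul, I_mul_I, mul_assoc R P, ← mul_assoc P, hPR]
  simp only [neg_mul, mul_neg, ← mul_assoc, hR, one_mul, hP, neg_smul, one_smul, neg_neg]

variable [TopologicalSpace 𝔸] [IsTopologicalRing 𝔸] [T2Space 𝔸]

theorem exp_smul_mul_mul_anticomm (hPR : P * R = -(R * P)) (a : ℂ) :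
    (exp (a • R) * P) * R = -(R * (exp (a • R) * P)) := by
  rw [mul_assoc, hPR, mul_neg, ← mul_assoc, ← mul_assoc,
    ((Commute.refl R).smul_right a).exp_right.eq]

variable [ContinuousSMul ℂ 𝔸]

theorem exp_smul_mul_mul_self (hP : P * P = 1) (hR : R * R = 1) (hPR : P * R = -(R * P))
    (a : ℂ) : (exp (a • R) * P) * (exp (a • R) * P) = 1 := by
  have hPRx : ∀ x : 𝔸, P * (R * x) = -(R * (P * x)) := fun x => by
    rw [← mul_assoc, hPR, neg_mul, mul_assoc]
  simp only [exp_smul_of_mul_self_eq_one hR, mul_add, add_mul, smul_mul_assoc, mul_smul_comm,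
    mul_one, one_mul, mul_assoc, hP, hR, hPRx, mul_neg, smul_neg]
  match_scalars
  · linear_combination cosh_sq_sub_sinh_sq a
  · ring

theorem exp_smul_I_smul_mul_mul (hP : P * P = 1) (hR : R * R = 1) (hPR : P * R = -(R * P))
    (a : ℂ) : exp (a • I • (R * P)) * P = cosh a • P + (sinh a * I) • R := by
  rw [exp_smul_of_mul_self_eq_one (I_smul_mul_mul_self hP hR hPR)]
  simp only [add_mul, smul_mul_assoc, mul_assoc, hP, mul_one, one_mul, smul_smul]

end AnticommutingInvolutions

theorem commutes_with_C_iff_general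
    {𝕳 : Type*} [NormedAddCommGroup 𝕳] [InnerProductSpace ℂ 𝕳]
    [Nontrivial 𝕳]
    (P R : 𝕳 →L[ℂ] 𝕳)
    (hP2 : ∀ f, P (P f) = f)
    (hR2 : ∀ f, R (R f) = f)
    (hanti : P ∘L R = -(R ∘L P))
    (ξ χ : ℝ)
    (Pξ : 𝕳 →L[ℂ] 𝕳)
    (hPξ : Pξ = NormedSpace.exp ((Complex.I * (ξ : ℂ)) • R) ∘L P)
    (C : 𝕳 →L[ℂ] 𝕳)
    (hC : C = NormedSpace.exp ((χ : ℂ) • (Complex.I • (R ∘L Pξ))) ∘L Pξ)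
    (β₀ β₁ : ℝ) (β₂ : ℂ)
    (T : 𝕳 →L[ℂ] 𝕳)
    (hT : T = (β₀ : ℂ) • (1 : 𝕳 →L[ℂ] 𝕳) + (β₁ : ℂ) • Pξ + β₂ • R) :
    (C ∘L T = T ∘L C ↔ β₂ = Complex.I * (β₁ : ℂ) * (Real.tanh χ : ℂ))
    ∧ (C ∘L T = T ∘L C ↔ ∃ b₀ b₁ : ℝ,
        T = (b₀ : ℂ) • (1 : 𝕳 →L[ℂ] 𝕳) + (b₁ : ℂ) • C) := by
  have hP : P * P = 1 := ContinuousLinearMap.ext hP2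
  have hR : R * R = 1 := ContinuousLinearMap.ext hR2
  have hPξ2 : Pξ * Pξ = 1 := hPξ ▸ exp_smul_mul_mul_self hP hR hanti _
  have hPξR : Pξ * R = -(R * Pξ) := hPξ ▸ exp_smul_mul_mul_anticomm hanti _
  have hC_eq : C = (Real.cosh χ : ℂ) • Pξ + (Real.sinh χ * I : ℂ) • R := by
    rw [hC, ofReal_cosh, ofReal_sinh]
    exact exp_smul_I_smul_mul_mul hPξ2 hR hPξR _
  have hcosh : (Real.cosh χ : ℂ) ≠ 0 := ofReal_ne_zero.mpr (Real.cosh_pos χ).ne'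
  have hcomm_iff : C ∘L T = T ∘L C ↔ β₂ = I * β₁ * Real.tanh χ := by
    rw [Real.tanh_eq_sinh_div_cosh, ofReal_div, hT, hC_eq]
    refine (commute_smul_add_smul_iff hPξ2 hR hPξR _ _ _ _ _).trans ?_
    field_simp
  refine ⟨hcomm_iff, hcomm_iff.trans ⟨fun h => ⟨β₀, β₁ / Real.cosh χ, ?_⟩, ?_⟩⟩
  · rw [hT, hC_eq, h, Real.tanh_eq_sinh_div_cosh, ofReal_div, ofReal_div, smul_add, smul_smul,
      smul_smul, add_assoc]
    congr 3 <;> field_simp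
  · rintro ⟨b₀, b₁, rfl⟩
    exact hcomm_iff.mp
      (((Commute.one_right C).smul_right _).add_right ((Commute.refl C).smul_right _))

/-- for `𝒞 = exp(χ iℛ𝒫_ξ)𝒫_ξ` and `T = β₀I + β₁𝒫_ξ + β₂ℛ` with `β₀, β₁`
real and `β₂` purely imaginary, `𝒞T = T𝒞` iff `β₂ = i β₁ tanh χ`, equivalently iff
`T = b₀I + b₁𝒞` for some real `b₀, b₁`. -/
theorem commutes_with_C_iff
    {𝕳 : Type*} [NormedAddCommGroup 𝕳] [InnerProductSpace ℂ 𝕳] [CompleteSpace 𝕳]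
    [Nontrivial 𝕳]
    (P R : 𝕳 →L[ℂ] 𝕳)
    (hP2 : ∀ f, P (P f) = f)
    (hPinner : ∀ f g : 𝕳, ⟪P f, P g⟫_ℂ = ⟪f, g⟫_ℂ)
    (hR2 : ∀ f, R (R f) = f)
    (hRinner : ∀ f g : 𝕳, ⟪R f, R g⟫_ℂ = ⟪f, g⟫_ℂ)
    (hanti : P ∘L R = -(R ∘L P))
    (ξ χ : ℝ)
    (Pξ : 𝕳 →L[ℂ] 𝕳)
    (hPξ : Pξ = NormedSpace.exp ((Complex.I * (ξ : ℂ)) • R) ∘L P)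
    (C : 𝕳 →L[ℂ] 𝕳)
    (hC : C = NormedSpace.exp ((χ : ℂ) • (Complex.I • (R ∘L Pξ))) ∘L Pξ)
    (β₀ β₁ : ℝ) (β₂ : ℂ) (hβ₂ : β₂.re = 0)
    (T : 𝕳 →L[ℂ] 𝕳)
    (hT : T = (β₀ : ℂ) • (1 : 𝕳 →L[ℂ] 𝕳) + (β₁ : ℂ) • Pξ + β₂ • R) :
    (C ∘L T = T ∘L C ↔ β₂ = Complex.I * (β₁ : ℂ) * (Real.tanh χ : ℂ))
    ∧ (C ∘L T = T ∘L C ↔ ∃ b₀ b₁ : ℝ,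
        T = (b₀ : ℂ) • (1 : 𝕳 →L[ℂ] 𝕳) + (b₁ : ℂ) • C) :=
  commutes_with_C_iff_general P R hP2 hR2 hanti ξ χ Pξ hPξ C hC β₀ β₁ β₂ T hT
end

section
/- Let σ₁ = [[0,1],[1,0]] and σ₃ = [[1,0],[0,−1]] be Pauli matrices, let ξ, χ, β₀, β₁ ∈ ℝ, and set σ₃ξ := exp(iξσ₁)σ₃, C := exp(χ·iσ₁σ₃ξ)·σ₃ξ, and T := β₀·I + β₁·C. Then both matrices exp(−χ·iσ₁σ₃ξ)·T and (1/2)·exp(−χ·iσ₁σ₃ξ) − exp(−χ·iσ₁σ₃ξ)·T are positive semidefinite if and only if 0 ≤ β₀ ≤ 1/2 and |β₁| ≤ min(1/2 − β₀, β₀). -/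
/-!
Write `Z = σ₃ξ` and `K = χ·iσ₁Z`. Since `σ₃` is an involution anticommuting with `σ₁`, we have
`Z = W σ₃ W*` for the unitary `W = exp(iξσ₁/2)`, which commutes with `σ₁`; so `Z` is a Hermitian
involution anticommuting with `σ₁`, and `K` is Hermitian and anticommutes with `Z`. Then
`E·C = Z`, and both matrices in question have the form `a·e^{-K} + b·Z`. Anticommutation gives
`e^{-K/2} Z e^{-K/2} = Z`, so `a·e^{-K} + b·Z` is the congruence of `a + b·Z` by the invertible
Hermitian `e^{-K/2}`, and finally `a + b·Z = W (a + b·σ₃) W*` is positive semidefinite iff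
`|b| ≤ a`.
-/

open scoped ComplexOrder

open Matrix NormedSpace

section StarRing

variable {R : Type*} [Ring R] [StarRing R] {W D Y : R}

theorem Unitary.conj_mul_self_eq_one (hW : W ∈ unitary R) (hD : D * D = 1) :
    W * D * star W * (W * D * star W) = 1 := by
  calc W * D * star W * (W * D * star W) = W * D * (star W * W) * D * star W := by
        simp only [mul_assoc]
    _ = 1 := by
      rw [Unitary.star_mul_self_of_mem hW, mul_one, mul_assoc W, hD, mul_one,
        Unitary.mul_star_self_of_mem hW]

theorem Unitary.conj_mul_mul_conj_eq_neg (hW : W ∈ unitary R) (hWY : Commute W Y)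
    (hDY : D * Y * D = -Y) : W * D * star W * Y * (W * D * star W) = -Y := by
  have hY : star W * Y * W = Y := by
    rw [mul_assoc, ← hWY.eq, ← mul_assoc, Unitary.star_mul_self_of_mem hW, one_mul]
  calc W * D * star W * Y * (W * D * star W) = W * (D * (star W * Y * W) * D) * star W := by
        simp only [mul_assoc]
    _ = -Y := by
      rw [hY, hDY, mul_neg, neg_mul, hWY.eq, mul_assoc, Unitary.mul_star_self_of_mem hW, mul_one]

theorem star_mul_eq_neg_of_mul_mul_eq_neg (hY : IsSelfAdjoint Y) (hD : IsSelfAdjoint D)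
    (hDD : D * D = 1) (hDY : D * Y * D = -Y) : star (Y * D) = -(Y * D) := by
  calc star (Y * D) = D * Y * D * D := by
        rw [star_mul, hY.star_eq, hD.star_eq, mul_assoc _ D D, hDD, mul_one]
    _ = -(Y * D) := by rw [hDY, neg_mul]

end StarRing

namespace Matrix

variable {n : Type*} [Fintype n] [DecidableEq n] {𝕜 : Type*} [RCLike 𝕜]

theorem exp_neg_mul_exp (A : Matrix n n 𝕜) : exp (-A) * exp A = 1 := by
  rw [← exp_add_of_commute _ _ ((Commute.refl A).neg_left), neg_add_cancel, exp_zero]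

theorem exp_mem_unitaryGroup {A : Matrix n n 𝕜} (hA : Aᴴ = -A) : exp A ∈ unitaryGroup n 𝕜 := by
  rw [mem_unitaryGroup_iff', star_eq_conjTranspose, ← exp_conjTranspose, hA, exp_neg_mul_exp]

theorem mul_exp_mul_eq_exp_neg {V A : Matrix n n 𝕜} (hV : V * V = 1) (hVA : V * A * V = -A) :
    V * exp A * V = exp (-A) := by
  have hconj := exp_conj V A ⟨⟨V, V, hV, hV⟩, rfl⟩
  rwa [inv_eq_left_inv hV, hVA, eq_comm] at hconj

theorem exp_add_self_mul_eq {V A : Matrix n n 𝕜} (hV : V * V = 1) (hVA : V * A * V = -A) :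
    exp (A + A) * V = exp A * V * exp (-A) := by
  rw [← mul_exp_mul_eq_exp_neg hV hVA, exp_add_of_commute _ _ (Commute.refl A)]
  simp only [mul_assoc]
  rw [← mul_assoc V V, hV, one_mul]

theorem posSemidef_smul_exp_neg_add_smul_iff {K Z : Matrix n n 𝕜} (hK : K.IsHermitian)
    (hZ : Z * Z = 1) (hZK : Z * K * Z = -K) (a b : 𝕜) :
    (a • exp (-K) + b • Z).PosSemidef ↔ (a • 1 + b • Z).PosSemidef := by
  set L := (1 / 2 : ℝ) • K
  have hsq : exp (-L) * exp (-L) = exp (-K) := by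
    rw [← exp_add_of_commute _ _ (Commute.refl _), ← neg_add, ← add_smul, add_halves, one_smul]
  have hZSZ : Z * exp (-L) * Z = exp L := by
    rw [mul_exp_mul_eq_exp_neg hZ, neg_neg]
    simp only [L, mul_neg, neg_mul, mul_smul_comm, smul_mul_assoc, hZK, smul_neg]
  have hfix : exp (-L) * Z * exp (-L) = Z := by
    calc exp (-L) * Z * exp (-L) = exp (-L) * (Z * exp (-L) * Z) * Z := by
          simp only [mul_assoc, hZ, mul_one]
      _ = Z := by rw [hZSZ, exp_neg_mul_exp, one_mul]
  have hherm : star (exp (-L)) = exp (-L) := ((hK.smul (IsSelfAdjoint.all _)).neg.exp).eq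
  have hconj : star (exp (-L)) * (a • 1 + b • Z) * exp (-L) = a • exp (-K) + b • Z := by
    simp only [hherm, mul_add, add_mul, mul_smul_comm, smul_mul_assoc, mul_one, hsq, hfix]
  rw [← hconj, IsUnit.posSemidef_star_left_conjugate_iff (isUnit_exp _)]

theorem posSemidef_smul_one_add_smul_conj_iff {W D : Matrix n n 𝕜} (hW : W ∈ unitaryGroup n 𝕜)
    (a b : 𝕜) : (a • 1 + b • (W * D * star W)).PosSemidef ↔ (a • 1 + b • D).PosSemidef := by
  rw [← IsUnit.posSemidef_star_right_conjugate_iff (x := a • 1 + b • D)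
    (Unitary.isUnit_coe (U := ⟨W, hW⟩))]
  simp only [mul_add, add_mul, mul_smul_comm, smul_mul_assoc, mul_one,
    Unitary.mul_star_self_of_mem hW]

theorem exists_unitary_exp_I_smul_mul_eq_conj {Y D : Matrix n n ℂ} (hY : Y.IsHermitian)
    (hD : D * D = 1) (hDY : D * Y * D = -Y) (ξ : ℝ) :
    ∃ W ∈ unitaryGroup n ℂ, Commute W Y ∧ exp ((Complex.I * ξ) • Y) * D = W * D * star W := by
  set A := (Complex.I * (ξ / 2 : ℝ)) • Y with hA_def
  have hA : Aᴴ = -A := by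
    simp [A, conjTranspose_smul, hY.eq]
  have hDA : D * A * D = -A := by
    simp only [A, mul_smul_comm, smul_mul_assoc, hDY, smul_neg]
  refine ⟨exp A, exp_mem_unitaryGroup hA, ((Commute.refl Y).smul_left _).exp_left, ?_⟩
  rw [star_eq_conjTranspose, ← exp_conjTranspose, hA, ← exp_add_self_mul_eq hD hDA, hA_def,
    ← add_smul]
  congr 3
  push_cast
  ring

theorem isHermitian_ofReal_smul_I_smul_mul {Y Z : Matrix n n ℂ} (hY : Y.IsHermitian)
    (hZ : Z.IsHermitian) (hZZ : Z * Z = 1) (hZY : Z * Y * Z = -Y) (χ : ℝ) :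
    ((χ : ℂ) • (Complex.I • (Y * Z))).IsHermitian := by
  have hYZ := star_mul_eq_neg_of_mul_mul_eq_neg hY.isSelfAdjoint hZ.isSelfAdjoint hZZ hZY
  simp [IsHermitian, ← star_eq_conjTranspose, hYZ]

end Matrix

def pauliX (R : Type*) [Zero R] [One R] : Matrix (Fin 2) (Fin 2) R := !![0, 1; 1, 0]

def pauliZ (R : Type*) [Zero R] [One R] [Neg R] : Matrix (Fin 2) (Fin 2) R := !![1, 0; 0, -1]

section Pauli

variable {R : Type*} [Ring R]

theorem pauliZ_mul_self : pauliZ R * pauliZ R = 1 := by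
  ext i j; fin_cases i <;> fin_cases j <;> simp [pauliZ]

theorem pauliZ_mul_pauliX_mul_pauliZ : pauliZ R * pauliX R * pauliZ R = -pauliX R := by
  ext i j; fin_cases i <;> fin_cases j <;> simp [pauliZ, pauliX]

theorem isHermitian_pauliX [StarRing R] : (pauliX R).IsHermitian := by
  ext i j; fin_cases i <;> fin_cases j <;> simp [pauliX]

theorem isHermitian_pauliZ [StarRing R] : (pauliZ R).IsHermitian := by
  ext i j; fin_cases i <;> fin_cases j <;> simp [pauliZ]

end Pauli

theorem posSemidef_smul_one_add_smul_pauliZ_iff (a b : ℝ) :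
    ((a : ℂ) • (1 : Matrix (Fin 2) (Fin 2) ℂ) + (b : ℂ) • pauliZ ℂ).PosSemidef ↔ |b| ≤ a := by
  have hdiag : (a : ℂ) • (1 : Matrix (Fin 2) (Fin 2) ℂ) + (b : ℂ) • pauliZ ℂ =
      diagonal ![((a + b : ℝ) : ℂ), ((a - b : ℝ) : ℂ)] := by
    ext i j
    fin_cases i <;> fin_cases j <;> simp [pauliZ, sub_eq_add_neg]
  rw [hdiag, posSemidef_diagonal_iff, Fin.forall_fin_two, abs_le]
  simp only [cons_val_zero, cons_val_one, Complex.zero_le_real]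
  constructor <;> rintro ⟨h₁, h₂⟩ <;> constructor <;> linarith

/-- for `σ₃ξ = exp(iξσ₁)σ₃`, `C = exp(χ iσ₁σ₃ξ)σ₃ξ` and `T = β₀I + β₁C`,
both `exp(-χ iσ₁σ₃ξ)T` and `(1/2)exp(-χ iσ₁σ₃ξ) - exp(-χ iσ₁σ₃ξ)T` are positive
semidefinite iff `0 ≤ β₀ ≤ 1/2` and `|β₁| ≤ min(1/2 - β₀, β₀)`. -/
theorem zero_perturbed_nonneg_iff
    (ξ χ β₀ β₁ : ℝ)
    (σ₁ σ₃ σ₃ξ C T E : Matrix (Fin 2) (Fin 2) ℂ)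
    (hσ₁ : σ₁ = !![0, 1; 1, 0])
    (hσ₃ : σ₃ = !![1, 0; 0, -1])
    (hσ₃ξ : σ₃ξ = NormedSpace.exp ((Complex.I * (ξ : ℂ)) • σ₁) * σ₃)
    (hC : C = NormedSpace.exp ((χ : ℂ) • (Complex.I • (σ₁ * σ₃ξ))) * σ₃ξ)
    (hT : T = (β₀ : ℂ) • (1 : Matrix (Fin 2) (Fin 2) ℂ) + (β₁ : ℂ) • C)
    (hE : E = NormedSpace.exp (-((χ : ℂ) • (Complex.I • (σ₁ * σ₃ξ))))) :
    ((E * T).PosSemidef ∧ ((1 / 2 : ℂ) • E - E * T).PosSemidef)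
      ↔ (0 ≤ β₀ ∧ β₀ ≤ 1 / 2 ∧ |β₁| ≤ min (1 / 2 - β₀) β₀) := by
  obtain rfl : σ₁ = pauliX ℂ := hσ₁
  obtain rfl : σ₃ = pauliZ ℂ := hσ₃
  obtain ⟨W, hW, hWX, hZ⟩ := exists_unitary_exp_I_smul_mul_eq_conj isHermitian_pauliX
    pauliZ_mul_self pauliZ_mul_pauliX_mul_pauliZ ξ
  rw [← hσ₃ξ] at hZ
  have hZH : σ₃ξ.IsHermitian := hZ ▸ isHermitian_mul_mul_conjTranspose W isHermitian_pauliZ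
  have hZZ : σ₃ξ * σ₃ξ = 1 := hZ ▸ Unitary.conj_mul_self_eq_one hW pauliZ_mul_self
  have hZX : σ₃ξ * pauliX ℂ * σ₃ξ = -pauliX ℂ :=
    hZ ▸ Unitary.conj_mul_mul_conj_eq_neg hW hWX pauliZ_mul_pauliX_mul_pauliZ
  set K := (χ : ℂ) • (Complex.I • (pauliX ℂ * σ₃ξ))
  have hK : K.IsHermitian := isHermitian_ofReal_smul_I_smul_mul isHermitian_pauliX hZH hZZ hZX χ
  have hZK : σ₃ξ * K * σ₃ξ = -K := by
    simp only [K, mul_smul_comm, smul_mul_assoc, ← mul_assoc, hZX, smul_neg, neg_mul]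
  have hET : E * T = (β₀ : ℂ) • exp (-K) + (β₁ : ℂ) • σ₃ξ := by
    rw [hT, mul_add, mul_smul_comm, mul_smul_comm, hE, hC, ← mul_assoc, exp_neg_mul_exp,
      one_mul, mul_one]
  have hET' : (1 / 2 : ℂ) • E - E * T =
      ((1 / 2 - β₀ : ℝ) : ℂ) • exp (-K) + ((-β₁ : ℝ) : ℂ) • σ₃ξ := by
    rw [hET, hE]; push_cast; module
  rw [hET', hET, posSemidef_smul_exp_neg_add_smul_iff hK hZZ hZK,
    posSemidef_smul_exp_neg_add_smul_iff hK hZZ hZK, hZ,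
    posSemidef_smul_one_add_smul_conj_iff hW, posSemidef_smul_one_add_smul_conj_iff hW,
    posSemidef_smul_one_add_smul_pauliZ_iff, posSemidef_smul_one_add_smul_pauliZ_iff, abs_neg,
    le_min_iff]
  constructor
  · rintro ⟨h₀, h₁⟩
    exact ⟨(abs_nonneg _).trans h₀, by linarith [abs_nonneg β₁], h₁, h₀⟩
  · rintro ⟨-, -, h₁, h₀⟩
    exact ⟨h₀, h₁⟩
end

section
/- Let T and A be bounded linear operators on a complex Hilbert space 𝔥 with A invertible and AT = T*A. Let z ∈ ℂ be such that I − 2(1−iz)T is invertible, and set 𝕊(z) := (I − 2(1+iz)T)·(I − 2(1−iz)T)⁻¹. Then I − 2(1−i(−z̄))T = I − 2(1+i·conj(z))T is also invertible, and with 𝕊(−z̄) := (I − 2(1+i(−z̄))T)·(I − 2(1−i(−z̄))T)⁻¹ one has A·𝕊(z) = 𝕊(−z̄)*·A, where * denotes the Hilbert-space adjoint. -/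
/-!
From `A T = T* A` one gets `A (1 - cT) = (1 - cT*) A` for every scalar `c`; as `A` is
invertible, `1 - cT` and `1 - cT*` are invertible together (so their `Ring.inverse`s are
intertwined as well, with no assumption on `c`), and taking adjoints gives `1 - c̄T`.
The adjoint of `𝕊(-z̄)` conjugates the scalars `2(1 ± i(-z̄))` back to `2(1 ∓ iz)` and turns `T`
into `T*`, so both sides of the identity equal `(1 - 2(1+iz)T*)(1 - 2(1-iz)T*)⁻¹ A`.
-/

/-- The analytically continued Lax–Phillips scattering matrix
`𝕊(z) = (I - 2(1+iz)T)(I - 2(1-iz)T)⁻¹` associated with a bounded operator `T`. -/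
noncomputable def scatteringMatrix {𝕳 : Type*} [NormedAddCommGroup 𝕳]
    [InnerProductSpace ℂ 𝕳] [CompleteSpace 𝕳] (T : 𝕳 →L[ℂ] 𝕳) (z : ℂ) : 𝕳 →L[ℂ] 𝕳 :=
  (1 - (2 * (1 + Complex.I * z)) • T) * Ring.inverse (1 - (2 * (1 - Complex.I * z)) • T)

open scoped Ring

namespace SemiconjBy

theorem isUnit_iff {M : Type*} [Monoid M] {a x y : M} (ha : IsUnit a) (h : SemiconjBy a x y) :
    IsUnit x ↔ IsUnit y := by
  rw [← ha.mul_left_iff, h.eq, ha.mul_right_iff]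

theorem ringInverse_right {M₀ : Type*} [MonoidWithZero M₀] {a x y : M₀}
    (h : SemiconjBy a x y) (hxy : IsUnit x ↔ IsUnit y) : SemiconjBy a x⁻¹ʳ y⁻¹ʳ := by
  by_cases hx : IsUnit x
  · obtain ⟨u, rfl⟩ := hx
    obtain ⟨v, rfl⟩ := hxy.mp u.isUnit
    simpa only [Ring.inverse_unit] using h.units_inv_right
  · rw [Ring.inverse_non_unit x hx, Ring.inverse_non_unit y (hxy.not.mp hx)]
    exact zero_right a

end SemiconjBy

theorem Commute.ringInverse_right {M₀ : Type*} [MonoidWithZero M₀] {a b : M₀}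
    (h : Commute a b) : Commute a b⁻¹ʳ :=
  SemiconjBy.ringInverse_right h Iff.rfl

section Intertwining

variable {𝕜 R : Type*} [CommSemiring 𝕜] [Ring R] [Algebra 𝕜 R] {a x : R}

theorem SemiconjBy.one_sub_smul {y : R} (h : SemiconjBy a x y) (c : 𝕜) :
    SemiconjBy a (1 - c • x) (1 - c • y) :=
  (one_right a).sub_right (h.smul_right c)

variable [StarRing 𝕜] [StarRing R] [StarModule 𝕜 R]

theorem star_one_sub_smul_mul_ringInverse (b c : 𝕜) :
    star ((1 - star b • x) * (1 - star c • x)⁻¹ʳ)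
      = (1 - b • star x) * (1 - c • star x)⁻¹ʳ := by
  simp only [star_mul, ← Ring.inverse_star, star_sub, star_one, star_smul, star_star]
  have hcomm : Commute (1 - b • star x) (1 - c • star x) :=
    (SemiconjBy.one_sub_smul (SemiconjBy.one_sub_smul (Commute.refl (star x)) c).symm b).symm
  exact hcomm.ringInverse_right.eq.symm

theorem SemiconjBy.isUnit_one_sub_star_smul (ha : IsUnit a) (h : SemiconjBy a x (star x))
    {c : 𝕜} (hc : IsUnit (1 - c • x)) : IsUnit (1 - star c • x) := by
  have hc' : IsUnit (1 - c • star x) := ((h.one_sub_smul c).isUnit_iff ha).mp hc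
  simpa only [star_sub, star_one, star_smul, star_star] using hc'.star

theorem SemiconjBy.one_sub_smul_mul_ringInverse (ha : IsUnit a) (h : SemiconjBy a x (star x))
    (b c : 𝕜) :
    SemiconjBy a ((1 - b • x) * (1 - c • x)⁻¹ʳ)
      (star ((1 - star b • x) * (1 - star c • x)⁻¹ʳ)) := by
  rw [star_one_sub_smul_mul_ringInverse]
  have hc := h.one_sub_smul c
  exact (h.one_sub_smul b).mul_right (hc.ringInverse_right (hc.isUnit_iff ha))

end Intertwining

/-- if `A` is invertible and `AT = T*A`, then for any `z` with
`I - 2(1-iz)T` invertible, `I - 2(1+i z̄)T` is invertible and `A 𝕊(z) = 𝕊(-z̄)* A`. -/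
theorem krein_symmetry_of_scatteringMatrix
    {𝕳 : Type*} [NormedAddCommGroup 𝕳] [InnerProductSpace ℂ 𝕳] [CompleteSpace 𝕳]
    (T A : 𝕳 →L[ℂ] 𝕳) (hA : IsUnit A)
    (hATA : A ∘L T = ContinuousLinearMap.adjoint T ∘L A)
    (z : ℂ)
    (hz : IsUnit ((1 : 𝕳 →L[ℂ] 𝕳) - (2 * (1 - Complex.I * z)) • T)) :
    IsUnit ((1 : 𝕳 →L[ℂ] 𝕳) - (2 * (1 + Complex.I * starRingEnd ℂ z)) • T)
    ∧ A * scatteringMatrix T z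
        = ContinuousLinearMap.adjoint (scatteringMatrix T (-(starRingEnd ℂ z))) * A := by
  have hT : SemiconjBy A T (star T) := hATA
  have hb : star (2 * (1 + Complex.I * z)) = 2 * (1 + Complex.I * -starRingEnd ℂ z) := by
    simp only [Complex.star_def, map_mul, map_add, map_one, map_ofNat, Complex.conj_I]; ring
  have hc : star (2 * (1 - Complex.I * z)) = 2 * (1 + Complex.I * starRingEnd ℂ z) := by
    simp only [Complex.star_def, map_mul, map_sub, map_one, map_ofNat, Complex.conj_I]; ring
  refine ⟨hc ▸ hT.isUnit_one_sub_star_smul hA hz, ?_⟩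
  have hS := hT.one_sub_smul_mul_ringInverse hA (2 * (1 + Complex.I * z)) (2 * (1 - Complex.I * z))
  rw [hb, hc, show 1 + Complex.I * starRingEnd ℂ z = 1 - Complex.I * -starRingEnd ℂ z by ring]
    at hS
  exact hS
end

section
/- Let T be a bounded linear operator on a complex Hilbert space 𝔥 and let J be a conjugation on 𝔥 with JT = TJ. Let z ∈ ℂ be such that I − 2(1−iz)T is invertible, and set 𝕊(z) := (I − 2(1+iz)T)·(I − 2(1−iz)T)⁻¹. Then I − 2(1−i(−z̄))T is also invertible, and with 𝕊(−z̄) := (I − 2(1+i(−z̄))T)·(I − 2(1−i(−z̄))T)⁻¹ one has J·𝕊(z) = 𝕊(−z̄)·J. -/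
/-!
Conjugating an operator by `J` is a multiplicative bijection `A ↦ J A J` of the operator algebra,
so it preserves invertibility and commutes with `Ring.inverse`. Since `J` is antilinear and
commutes with `T`, it sends `1 - c T` to `1 - c̄ T`, and `conj (1 ± i z) = 1 ± i (-z̄)`; hence it
carries both factors of `𝕊(z)` to the corresponding factors of `𝕊(-z̄)`.
-/

open scoped InnerProductSpace

theorem MulEquiv.map_ringInverse {M N : Type*} [MonoidWithZero M] [MonoidWithZero N]
    (e : M ≃* N) (a : M) : e (Ring.inverse a) = Ring.inverse (e a) := by
  by_cases ha : IsUnit a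
  · obtain ⟨u, rfl⟩ := ha
    have hmap : e u = (Units.map e.toMonoidHom u : N) := rfl
    rw [hmap, Ring.inverse_unit, Ring.inverse_unit]
    rfl
  · rw [Ring.inverse_non_unit a ha, Ring.inverse_non_unit _ (by rwa [MulEquiv.isUnit_map]),
      map_zero]

namespace ContinuousLinearEquiv

section Semilinear

variable {𝕜 𝕜₂ : Type*} [Semiring 𝕜] [Semiring 𝕜₂] {σ : 𝕜 →+* 𝕜₂} {σ' : 𝕜₂ →+* 𝕜}
  [RingHomInvPair σ σ'] [RingHomInvPair σ' σ]
  {E F : Type*} [TopologicalSpace E] [AddCommMonoid E] [Module 𝕜 E]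
  [TopologicalSpace F] [AddCommMonoid F] [Module 𝕜₂ F]

def conjMulEquiv (e : E ≃SL[σ] F) : (E →L[𝕜] E) ≃* (F →L[𝕜₂] F) where
  toFun A := (e : E →SL[σ] F).comp (A.comp (e.symm : F →SL[σ'] E))
  invFun B := (e.symm : F →SL[σ'] E).comp (B.comp (e : E →SL[σ] F))
  left_inv A := by ext; simp
  right_inv B := by ext; simp
  map_mul' A B := by ext; simp

@[simp]
theorem conjMulEquiv_apply_apply (e : E ≃SL[σ] F) (A : E →L[𝕜] E) (x : F) :
    e.conjMulEquiv A x = e (A (e.symm x)) :=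
  rfl

end Semilinear

theorem conjMulEquiv_one_sub_smul {𝕜 : Type*} [CommRing 𝕜]
    {σ σ' : 𝕜 →+* 𝕜} [RingHomInvPair σ σ'] [RingHomInvPair σ' σ]
    {E : Type*} [TopologicalSpace E] [AddCommGroup E] [Module 𝕜 E] [IsTopologicalAddGroup E]
    [ContinuousConstSMul 𝕜 E] (e : E ≃SL[σ] E) {T : E →L[𝕜] E} (heT : ∀ x, e (T x) = T (e x))
    (c : 𝕜) : e.conjMulEquiv (1 - c • T) = 1 - σ c • T := by
  ext x
  simp [heT]

end ContinuousLinearEquiv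

def linearIsometryEquivOfConjugation {𝕜 𝕳 : Type*} [RCLike 𝕜] [NormedAddCommGroup 𝕳]
    [InnerProductSpace 𝕜 𝕳] (J : 𝕳 → 𝕳) (hJadd : ∀ f g, J (f + g) = J f + J g)
    (hJsmul : ∀ (c : 𝕜) (f : 𝕳), J (c • f) = starRingEnd 𝕜 c • J f)
    (hJ2 : ∀ f, J (J f) = f) (hJinner : ∀ f g : 𝕳, ⟪J f, J g⟫_𝕜 = ⟪g, f⟫_𝕜) :
    𝕳 ≃ₗᵢ⋆[𝕜] 𝕳 where
  toFun := J
  invFun := J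
  map_add' := hJadd
  map_smul' := hJsmul
  left_inv := hJ2
  right_inv := hJ2
  norm_map' f := by
    change ‖J f‖ = ‖f‖
    rw [norm_eq_sqrt_re_inner (𝕜 := 𝕜), norm_eq_sqrt_re_inner (𝕜 := 𝕜) f, hJinner]

theorem Complex.conj_two_mul_one_sub_I_mul (z : ℂ) :
    starRingEnd ℂ (2 * (1 - Complex.I * z)) = 2 * (1 - Complex.I * -starRingEnd ℂ z) := by
  simp only [map_mul, map_sub, map_one, map_ofNat, Complex.conj_I]
  ring

theorem Complex.conj_two_mul_one_add_I_mul (z : ℂ) :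
    starRingEnd ℂ (2 * (1 + Complex.I * z)) = 2 * (1 + Complex.I * -starRingEnd ℂ z) := by
  simp only [map_mul, map_add, map_one, map_ofNat, Complex.conj_I]
  ring

theorem map_scatteringMatrix_of_map_one_sub_smul {𝕳 : Type*} [NormedAddCommGroup 𝕳]
    [InnerProductSpace ℂ 𝕳] [CompleteSpace 𝕳] {T : 𝕳 →L[ℂ] 𝕳} (Φ : (𝕳 →L[ℂ] 𝕳) ≃* (𝕳 →L[ℂ] 𝕳))
    (hΦ : ∀ c : ℂ, Φ (1 - c • T) = 1 - starRingEnd ℂ c • T) (z : ℂ) :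
    Φ (scatteringMatrix T z) = scatteringMatrix T (-starRingEnd ℂ z) := by
  rw [scatteringMatrix, scatteringMatrix, map_mul, MulEquiv.map_ringInverse, hΦ, hΦ,
    Complex.conj_two_mul_one_add_I_mul, Complex.conj_two_mul_one_sub_I_mul]

/-- if a conjugation `J` commutes with `T`, then for any `z` with
`I - 2(1-iz)T` invertible, `I - 2(1-i(-z̄))T` is invertible and `J 𝕊(z) = 𝕊(-z̄) J`. -/
theorem conjugation_symmetry_of_scatteringMatrix
    {𝕳 : Type*} [NormedAddCommGroup 𝕳] [InnerProductSpace ℂ 𝕳] [CompleteSpace 𝕳]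
    (T : 𝕳 →L[ℂ] 𝕳)
    (J : 𝕳 → 𝕳)
    (hJadd : ∀ f g, J (f + g) = J f + J g)
    (hJsmul : ∀ (c : ℂ) (f : 𝕳), J (c • f) = (starRingEnd ℂ c) • J f)
    (hJ2 : ∀ f, J (J f) = f)
    (hJinner : ∀ f g : 𝕳, ⟪J f, J g⟫_ℂ = ⟪g, f⟫_ℂ)
    (hJT : ∀ f, J (T f) = T (J f))
    (z : ℂ)
    (hz : IsUnit ((1 : 𝕳 →L[ℂ] 𝕳) - (2 * (1 - Complex.I * z)) • T)) :
    IsUnit ((1 : 𝕳 →L[ℂ] 𝕳) - (2 * (1 - Complex.I * (-(starRingEnd ℂ z)))) • T)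
    ∧ ∀ f, J (scatteringMatrix T z f) = scatteringMatrix T (-(starRingEnd ℂ z)) (J f) := by
  set Φ := (linearIsometryEquivOfConjugation J hJadd hJsmul hJ2
    hJinner).toContinuousLinearEquiv.conjMulEquiv
  have hΦ (c : ℂ) : Φ (1 - c • T) = 1 - starRingEnd ℂ c • T :=
    ContinuousLinearEquiv.conjMulEquiv_one_sub_smul _ hJT c
  refine ⟨?_, fun f => ?_⟩
  · rw [← Complex.conj_two_mul_one_sub_I_mul, ← hΦ]
    exact hz.map Φ
  · have hS (g : 𝕳) : J (scatteringMatrix T z (J g)) = scatteringMatrix T (-starRingEnd ℂ z) g :=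
      congr($(map_scatteringMatrix_of_map_one_sub_smul Φ hΦ z) g)
    rw [← hS, hJ2]
end

section
/- Let T be a bounded linear operator on a complex Hilbert space and let z ∈ ℂ with z ≠ 0 and 1 − iz ≠ 0 be such that I − 2(1−iz)T is invertible. Set 𝕊 := (I − 2(1+iz)T)·(I − 2(1−iz)T)⁻¹ and θ := (1+iz)/(1−iz). Then 𝕊 − θ·I is invertible and T = (1/(2(iz−1)))·(I − 𝕊)·(𝕊 − θ·I)⁻¹. -/
/-! Writing `A = 1 - a • T` and `B = 1 - b • T` with `θ = b / a`, one has `B - θ • A = (1 - θ) • 1`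
and `A - B = (b - a) • T`. Hence `B A⁻¹ - θ • 1 = (1 - θ) • A⁻¹` is invertible with inverse
`(1 - θ)⁻¹ • A`, and `(1 - B A⁻¹) (B A⁻¹ - θ • 1)⁻¹ = ((b - a) / (1 - θ)) • T = -a • T`. -/

section CayleyTransform

variable {𝕜 R : Type*} [Field 𝕜] [Ring R] [Algebra 𝕜 R]

theorem isUnit_smul_iff_of_ne_zero {c : 𝕜} (hc : c ≠ 0) (x : R) : IsUnit (c • x) ↔ IsUnit x :=
  isUnit_smul_iff (Units.mk0 c hc) x

theorem Ring.inverse_smul {c : 𝕜} (hc : c ≠ 0) (x : R) :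
    Ring.inverse (c • x) = c⁻¹ • Ring.inverse x := by
  by_cases hx : IsUnit x
  · have hcx : IsUnit (c • x) := (isUnit_smul_iff_of_ne_zero hc x).2 hx
    rw [← Ring.inverse_mul_cancel_left _ (c⁻¹ • Ring.inverse x) hcx, smul_mul_smul_comm,
      mul_inv_cancel₀ hc, Ring.mul_inverse_cancel x hx, one_smul, mul_one]
  · rw [Ring.inverse_non_unit x hx, smul_zero,
      Ring.inverse_non_unit _ (mt (isUnit_smul_iff_of_ne_zero hc x).1 hx)]

noncomputable def cayleyTransform (a b : 𝕜) (T : R) : R :=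
  (1 - b • T) * Ring.inverse (1 - a • T)

variable {a b : 𝕜} {T : R}

theorem cayleyTransform_sub_smul_one (hT : IsUnit (1 - a • T)) (ha : a ≠ 0) :
    cayleyTransform a b T - (b / a) • 1 = (1 - b / a) • Ring.inverse (1 - a • T) := by
  have hB : 1 - b • T - (b / a) • (1 - a • T) = (1 - b / a) • (1 : R) := by
    rw [smul_sub, smul_smul, div_mul_cancel₀ b ha, sub_smul, one_smul]
    abel
  rw [cayleyTransform, ← Ring.mul_inverse_cancel_right _ ((b / a) • (1 : R)) hT, smul_one_mul,
    ← sub_mul, hB, smul_one_mul]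

theorem one_sub_cayleyTransform (hT : IsUnit (1 - a • T)) :
    1 - cayleyTransform a b T = ((b - a) • T) * Ring.inverse (1 - a • T) := by
  nth_rw 1 [cayleyTransform, ← Ring.mul_inverse_cancel _ hT]
  rw [← sub_mul, sub_sub_sub_cancel_left, sub_smul]

theorem isUnit_cayleyTransform_sub_smul_one (hT : IsUnit (1 - a • T)) (ha : a ≠ 0)
    (hab : a ≠ b) : IsUnit (cayleyTransform a b T - (b / a) • 1) := by
  have hθ : 1 - b / a ≠ 0 := sub_ne_zero.2 fun h => hab ((div_eq_one_iff_eq ha).1 h.symm).symm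
  rw [cayleyTransform_sub_smul_one hT ha, isUnit_smul_iff_of_ne_zero hθ]
  exact hT.ringInverse

theorem eq_smul_one_sub_cayleyTransform_mul_inverse (hT : IsUnit (1 - a • T)) (ha : a ≠ 0)
    (hab : a ≠ b) :
    T = (-a⁻¹) • ((1 - cayleyTransform a b T) *
      Ring.inverse (cayleyTransform a b T - (b / a) • 1)) := by
  have hθ : 1 - b / a ≠ 0 := sub_ne_zero.2 fun h => hab ((div_eq_one_iff_eq ha).1 h.symm).symm
  rw [one_sub_cayleyTransform hT, cayleyTransform_sub_smul_one hT ha, Ring.inverse_smul hθ,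
    Ring.inverse_inverse hT, mul_assoc, mul_smul_comm, Ring.inverse_mul_cancel _ hT,
    smul_mul_smul_comm, mul_one, smul_smul]
  have hc : -a⁻¹ * ((b - a) * (1 - b / a)⁻¹) = 1 := by
    field_simp
    ring
  rw [hc, one_smul]

end CayleyTransform

theorem parameter_from_scatteringMatrix_general
    {𝕳 : Type*} [NormedAddCommGroup 𝕳] [InnerProductSpace ℂ 𝕳]
    (T : 𝕳 →L[ℂ] 𝕳) (z : ℂ) (hz0 : z ≠ 0) (hz1 : 1 - Complex.I * z ≠ 0)
    (hz : IsUnit ((1 : 𝕳 →L[ℂ] 𝕳) - (2 * (1 - Complex.I * z)) • T))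
    (S : 𝕳 →L[ℂ] 𝕳)
    (hS : S = ((1 : 𝕳 →L[ℂ] 𝕳) - (2 * (1 + Complex.I * z)) • T)
        * Ring.inverse ((1 : 𝕳 →L[ℂ] 𝕳) - (2 * (1 - Complex.I * z)) • T))
    (θ : ℂ) (hθ : θ = (1 + Complex.I * z) / (1 - Complex.I * z)) :
    IsUnit (S - θ • (1 : 𝕳 →L[ℂ] 𝕳))
    ∧ T = (1 / (2 * (Complex.I * z - 1)))
        • (((1 : 𝕳 →L[ℂ] 𝕳) - S) * Ring.inverse (S - θ • (1 : 𝕳 →L[ℂ] 𝕳))) := by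
  have ha : 2 * (1 - Complex.I * z) ≠ 0 := mul_ne_zero two_ne_zero hz1
  have hab : 2 * (1 - Complex.I * z) ≠ 2 * (1 + Complex.I * z) := by
    intro h
    have hIz : Complex.I * z = 0 := by linear_combination -h / 4
    exact hz0 ((mul_eq_zero.1 hIz).resolve_left Complex.I_ne_zero)
  have hS' : S = cayleyTransform (2 * (1 - Complex.I * z)) (2 * (1 + Complex.I * z)) T := hS
  have hθ' : θ = 2 * (1 + Complex.I * z) / (2 * (1 - Complex.I * z)) := by
    rw [hθ, mul_div_mul_left _ _ two_ne_zero]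
  have hcoef : 1 / (2 * (Complex.I * z - 1)) = -(2 * (1 - Complex.I * z))⁻¹ := by
    rw [one_div, ← inv_neg]
    ring_nf
  rw [hS', hθ', hcoef]
  exact ⟨isUnit_cayleyTransform_sub_smul_one hz ha hab,
    eq_smul_one_sub_cayleyTransform_mul_inverse hz ha hab⟩

/-- the parameter `T` can be recovered from the scattering matrix
`𝕊 = (I - 2(1+iz)T)(I - 2(1-iz)T)⁻¹` by `T = (1/(2(iz-1)))(I - 𝕊)(𝕊 - θ I)⁻¹`,
`θ = (1+iz)/(1-iz)`. -/
theorem parameter_from_scatteringMatrix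
    {𝕳 : Type*} [NormedAddCommGroup 𝕳] [InnerProductSpace ℂ 𝕳] [CompleteSpace 𝕳]
    (T : 𝕳 →L[ℂ] 𝕳) (z : ℂ) (hz0 : z ≠ 0) (hz1 : 1 - Complex.I * z ≠ 0)
    (hz : IsUnit ((1 : 𝕳 →L[ℂ] 𝕳) - (2 * (1 - Complex.I * z)) • T))
    (S : 𝕳 →L[ℂ] 𝕳)
    (hS : S = ((1 : 𝕳 →L[ℂ] 𝕳) - (2 * (1 + Complex.I * z)) • T)
        * Ring.inverse ((1 : 𝕳 →L[ℂ] 𝕳) - (2 * (1 - Complex.I * z)) • T))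
    (θ : ℂ) (hθ : θ = (1 + Complex.I * z) / (1 - Complex.I * z)) :
    IsUnit (S - θ • (1 : 𝕳 →L[ℂ] 𝕳))
    ∧ T = (1 / (2 * (Complex.I * z - 1)))
        • (((1 : 𝕳 →L[ℂ] 𝕳) - S) * Ring.inverse (S - θ • (1 : 𝕳 →L[ℂ] 𝕳))) :=
  parameter_from_scatteringMatrix_general T z hz0 hz1 hz S hS θ hθ
end

section
/- Let T be a bounded linear operator on a complex Hilbert space 𝔥 and let J be a conjugation on 𝔥. Suppose z ∈ ℂ with z ≠ 0 and 1 − iz ≠ 0 is such that both I − 2(1−iz)T and I − 2(1+i·conj(z))T are invertible, and set 𝕊(z) := (I − 2(1+iz)T)·(I − 2(1−iz)T)⁻¹ and 𝕊(−z̄) := (I − 2(1+i(−z̄))T)·(I − 2(1−i(−z̄))T)⁻¹. If J·𝕊(z) = 𝕊(−z̄)·J, then JT = TJ. -/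
/-!
Put `a = 2(1 - iz)`, `A = 1 - aT` and `R = T A⁻¹`, so that `𝕊(z) = 1 - 4iz R`, `A⁻¹ = 1 + aR`
and `A R = T`; `A' = 1 - āT` and `R' = T A'⁻¹` play the same role for `𝕊(-z̄)`, with every
scalar conjugated. As `J` is antilinear and `z ≠ 0`, `J 𝕊(z) = 𝕊(-z̄) J` gives `J R = R' J`,
hence `J A⁻¹ = A'⁻¹ J`, so `J A = A' J` and `J T = J A R = A' R' J = T J`.
-/

open scoped InnerProductSpace

namespace Function.Semiconj

section Semiring

variable {K L M N : Type*} [Semiring K] [Semiring L] {σ : K →+* L}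
  [AddCommGroup M] [Module K M] [AddCommGroup N] [Module L N]
  {J : M →ₛₗ[σ] N} {f f' : M → M} {g g' : N → N}

theorem sub_right (h : Semiconj J f g) (h' : Semiconj J f' g') :
    Semiconj J (f - f') (g - g') := fun x ↦ by
  simp only [Pi.sub_apply, map_sub, h.eq, h'.eq]

theorem add_right (h : Semiconj J f g) (h' : Semiconj J f' g') :
    Semiconj J (f + f') (g + g') := fun x ↦ by
  simp only [Pi.add_apply, map_add, h.eq, h'.eq]

theorem smul_right (h : Semiconj J f g) (c : K) : Semiconj J (c • f) (σ c • g) :=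
  fun x ↦ by simp only [Pi.smul_apply, map_smulₛₗ, h.eq]

theorem id_add_smul_right (h : Semiconj J f g) (c : K) :
    Semiconj J (id + c • f) (id + σ c • g) :=
  id_right.add_right (h.smul_right c)

end Semiring

section DivisionRing

variable {K L M N : Type*} [DivisionRing K] [DivisionRing L] {σ : K →+* L}
  [AddCommGroup M] [Module K M] [AddCommGroup N] [Module L N]
  {J : M →ₛₗ[σ] N} {f : M → M} {g : N → N}

theorem of_smul_right {c : K} (h : Semiconj J (c • f) (σ c • g)) (hc : c ≠ 0) :
    Semiconj J f g := by
  simpa [smul_smul, hc] using h.smul_right c⁻¹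

theorem of_id_sub_smul_right {c : K} (h : Semiconj J (id - c • f) (id - σ c • g))
    (hc : c ≠ 0) : Semiconj J f g := by
  have := id_right.sub_right h
  rw [sub_sub_cancel, sub_sub_cancel] at this
  exact this.of_smul_right hc

end DivisionRing

end Function.Semiconj

theorem Function.Semiconj.of_ring_inverse {R S M N : Type*} [Semiring R] [Semiring S]
    [TopologicalSpace M] [AddCommMonoid M] [Module R M]
    [TopologicalSpace N] [AddCommMonoid N] [Module S N]
    {J : M → N} {X : M →L[R] M} {Y : N →L[S] N} (hX : IsUnit X) (hY : IsUnit Y)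
    (h : Function.Semiconj J ⇑(Ring.inverse X) ⇑(Ring.inverse Y)) :
    Function.Semiconj J X Y :=
  h.inverses_right (fun x ↦ by simpa using congr($(Ring.inverse_mul_cancel _ hX) x))
    (fun x ↦ by simpa using congr($(Ring.mul_inverse_cancel _ hY) x))

section InverseOneSubSmul

variable {𝕜 A : Type*} [CommRing 𝕜] [Ring A] [Algebra 𝕜 A] {a : 𝕜} {t : A}

theorem Ring.inverse_one_sub_smul (hu : IsUnit (1 - a • t)) :
    Ring.inverse (1 - a • t) = 1 + a • (t * Ring.inverse (1 - a • t)) := by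
  calc Ring.inverse (1 - a • t) = ((1 - a • t) + a • t) * Ring.inverse (1 - a • t) := by
        rw [sub_add_cancel, one_mul]
    _ = 1 + a • (t * Ring.inverse (1 - a • t)) := by
        rw [add_mul, Ring.mul_inverse_cancel _ hu, smul_mul_assoc]

theorem one_sub_smul_mul_inverse_one_sub_smul (hu : IsUnit (1 - a • t)) (p : 𝕜) :
    (1 - p • t) * Ring.inverse (1 - a • t) = 1 - (p - a) • (t * Ring.inverse (1 - a • t)) := by
  rw [show 1 - p • t = (1 - a • t) - (p - a) • t by module, sub_mul,
    Ring.mul_inverse_cancel _ hu, smul_mul_assoc]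

theorem one_sub_smul_mul_mul_inverse_one_sub_smul (hu : IsUnit (1 - a • t)) :
    (1 - a • t) * (t * Ring.inverse (1 - a • t)) = t := by
  have hcomm : (1 - a • t) * t = t * (1 - a • t) := by
    simp only [sub_mul, mul_sub, one_mul, mul_one, smul_mul_assoc, mul_smul_comm]
  rw [← mul_assoc, hcomm, mul_assoc, Ring.mul_inverse_cancel _ hu, mul_one]

end InverseOneSubSmul

theorem scatteringMatrix_eq_one_sub {𝕳 : Type*} [NormedAddCommGroup 𝕳]
    [InnerProductSpace ℂ 𝕳] [CompleteSpace 𝕳] {T : 𝕳 →L[ℂ] 𝕳} {z a b : ℂ}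
    (ha : a = 2 * (1 - Complex.I * z)) (hb : b = 4 * Complex.I * z)
    (hu : IsUnit (1 - a • T)) :
    scatteringMatrix T z = 1 - b • (T * Ring.inverse (1 - a • T)) := by
  rw [scatteringMatrix, ← ha, one_sub_smul_mul_inverse_one_sub_smul hu, ha, hb]
  ring_nf

open Function in
theorem conjugation_commutes_of_scatteringMatrix_symmetry_general
    {𝕳 : Type*} [NormedAddCommGroup 𝕳] [InnerProductSpace ℂ 𝕳] [CompleteSpace 𝕳]
    (T : 𝕳 →L[ℂ] 𝕳)
    (J : 𝕳 → 𝕳)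
    (hJadd : ∀ f g, J (f + g) = J f + J g)
    (hJsmul : ∀ (c : ℂ) (f : 𝕳), J (c • f) = (starRingEnd ℂ c) • J f)
    (z : ℂ) (hz0 : z ≠ 0)
    (hz : IsUnit ((1 : 𝕳 →L[ℂ] 𝕳) - (2 * (1 - Complex.I * z)) • T))
    (hz' : IsUnit ((1 : 𝕳 →L[ℂ] 𝕳) - (2 * (1 + Complex.I * starRingEnd ℂ z)) • T))
    (hsym : ∀ f, J (scatteringMatrix T z f)
        = scatteringMatrix T (-(starRingEnd ℂ z)) (J f)) :
    ∀ f, J (T f) = T (J f) := by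
  let Jₛ : 𝕳 →ₗ⋆[ℂ] 𝕳 := ⟨⟨J, hJadd⟩, hJsmul⟩
  set a : ℂ := 2 * (1 - Complex.I * z)
  set b : ℂ := 4 * Complex.I * z
  have ha : starRingEnd ℂ a = 2 * (1 - Complex.I * -starRingEnd ℂ z) := by simp [a, map_ofNat]
  have hb : starRingEnd ℂ b = 4 * Complex.I * -starRingEnd ℂ z := by simp [b, map_ofNat]
  have hu' : IsUnit (1 - starRingEnd ℂ a • T) := by convert hz' using 3; rw [ha]; ring
  set A := 1 - a • T
  set A' := 1 - starRingEnd ℂ a • T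
  have hS : Semiconj Jₛ ⇑(1 - b • (T * Ring.inverse A))
      ⇑(1 - starRingEnd ℂ b • (T * Ring.inverse A')) := by
    rwa [← scatteringMatrix_eq_one_sub rfl rfl hz, ← scatteringMatrix_eq_one_sub ha hb hu']
  have hR : Semiconj Jₛ ⇑(T * Ring.inverse A) ⇑(T * Ring.inverse A') := by
    simp only [FunLike.coe_sub, FunLike.coe_smul, FunLike.coe_one_eq_id] at hS
    exact hS.of_id_sub_smul_right (by simp [b, hz0])
  have hAinv : Semiconj Jₛ ⇑(Ring.inverse A) ⇑(Ring.inverse A') := by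
    rw [Ring.inverse_one_sub_smul hz, Ring.inverse_one_sub_smul hu']
    simpa only [FunLike.coe_add, FunLike.coe_smul, FunLike.coe_one_eq_id] using
      hR.id_add_smul_right a
  have hT := (hAinv.of_ring_inverse hz hu').comp_right hR
  rwa [← FunLike.coe_mul_eq_comp, ← FunLike.coe_mul_eq_comp,
    one_sub_smul_mul_mul_inverse_one_sub_smul hz,
    one_sub_smul_mul_mul_inverse_one_sub_smul hu'] at hT

/-- conversely, if a conjugation `J` intertwines `𝕊(z)` and `𝕊(-z̄)`
(for one suitable `z`), then `J` commutes with `T`. -/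
theorem conjugation_commutes_of_scatteringMatrix_symmetry
    {𝕳 : Type*} [NormedAddCommGroup 𝕳] [InnerProductSpace ℂ 𝕳] [CompleteSpace 𝕳]
    (T : 𝕳 →L[ℂ] 𝕳)
    (J : 𝕳 → 𝕳)
    (hJadd : ∀ f g, J (f + g) = J f + J g)
    (hJsmul : ∀ (c : ℂ) (f : 𝕳), J (c • f) = (starRingEnd ℂ c) • J f)
    (hJ2 : ∀ f, J (J f) = f)
    (hJinner : ∀ f g : 𝕳, ⟪J f, J g⟫_ℂ = ⟪g, f⟫_ℂ)
    (z : ℂ) (hz0 : z ≠ 0) (hz1 : 1 - Complex.I * z ≠ 0)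
    (hz : IsUnit ((1 : 𝕳 →L[ℂ] 𝕳) - (2 * (1 - Complex.I * z)) • T))
    (hz' : IsUnit ((1 : 𝕳 →L[ℂ] 𝕳) - (2 * (1 + Complex.I * starRingEnd ℂ z)) • T))
    (hsym : ∀ f, J (scatteringMatrix T z f)
        = scatteringMatrix T (-(starRingEnd ℂ z)) (J f)) :
    ∀ f, J (T f) = T (J f) :=
  conjugation_commutes_of_scatteringMatrix_symmetry_general T J hJadd hJsmul z hz0 hz hz' hsym
end
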